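/- Let g : ℝᵐ → ℝ ∪ {+∞} be convex and lower semicontinuous, let F : ℝⁿ → ℝᵐ have continuously differentiable components, let x̄ ∈ ℝⁿ satisfy F(x̄) ∈ int(dom g), let Δ̄ > 0, let {F̃_Δ : Δ ∈ (0, Δ̄)} be fully linear models of F at x̄ with constants κ_F > 0 and κ_G > 0, and suppose F̃_Δ(x̄) = F(x̄) for all Δ ∈ (0, Δ̄). Let M = sup{‖w‖ : w ∈ ∂g(F(x̄))} (finite since F(x̄) ∈ int(dom g)). Then for every Δ ∈ (0, Δ̄) and every ṽ ∈ ∇F̃_Δ(x̄)ᵀ ∂g(F(x̄)) there exists v ∈ ∇F(x̄)ᵀ ∂g(F(x̄)) such that ‖v − ṽ‖ ≤ M √m κ_G Δ. -/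

import Mathlib

/-!
The same multiplier works: for `ṽ = ∑ wᵢ ∇F̃ᵢ(x̄)` take `v = ∑ wᵢ ∇Fᵢ(x̄)`. Then
`‖v − ṽ‖ ≤ ∑ |wᵢ| κG Δ ≤ √m ‖w‖ κG Δ ≤ M √m κG Δ` by Cauchy–Schwarz and full linearity at `x̄`.
The supremum `M` is a genuine bound for `‖w‖` because `∂g(F(x̄))` is bounded: testing the
subgradient inequality at the `2m` points `F(x̄) ± r eᵢ` of `dom g` bounds every coordinate of `w`.
-/

open Metric Set

/-- The (convex) subdifferential of an extended-real-valued function `g` at `z̄`: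
`∂g(z̄) = {w : g(z) ≥ g(z̄) + ⟨w, z − z̄⟩ for all z}`. -/
def ERealSubdiff {m : ℕ} (g : EuclideanSpace ℝ (Fin m) → EReal)
    (zbar : EuclideanSpace ℝ (Fin m)) : Set (EuclideanSpace ℝ (Fin m)) :=
  {w | ∀ z, g zbar + ((inner ℝ w (z - zbar) : ℝ) : EReal) ≤ g z}

section Subdifferential

variable {m : ℕ} {g : EuclideanSpace ℝ (Fin m) → EReal} {zbar w : EuclideanSpace ℝ (Fin m)}

lemma inner_le_toReal_sub_of_mem_ERealSubdiff (hw : w ∈ ERealSubdiff g zbar)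
    (hbot : g zbar ≠ ⊥) (htop : g zbar ≠ ⊤) {z : EuclideanSpace ℝ (Fin m)} (hz : g z ≠ ⊤) :
    inner ℝ w (z - zbar) ≤ (g z).toReal - (g zbar).toReal := by
  have h := hw z
  rw [← EReal.coe_toReal htop hbot, ← EReal.coe_add] at h
  have := EReal.toReal_le_toReal h (EReal.coe_ne_bot _) hz
  rw [EReal.toReal_coe] at this
  linarith

lemma exists_abs_apply_le_of_mem_ERealSubdiff (hbot : g zbar ≠ ⊥)
    (hdom : zbar ∈ interior {z | g z < ⊤}) :
    ∃ C : Fin m → ℝ, ∀ w ∈ ERealSubdiff g zbar, ∀ i, |w i| ≤ C i := by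
  obtain ⟨r, hr, hball⟩ := Metric.mem_nhds_iff.mp (mem_interior_iff_mem_nhds.mp hdom)
  have htop : g zbar ≠ ⊤ := (hball (mem_ball_self hr)).ne
  let c (i : Fin m) (a : ℝ) := (g (zbar + EuclideanSpace.single i a)).toReal - (g zbar).toReal
  have hc : ∀ w ∈ ERealSubdiff g zbar, ∀ i a, |a| < r → a * w i ≤ c i a := by
    intro w hw i a ha
    have hz : g (zbar + EuclideanSpace.single i a) ≠ ⊤ :=
      (hball (by simpa [dist_eq_norm] using ha)).ne
    simpa [EuclideanSpace.inner_single_right] using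
      inner_le_toReal_sub_of_mem_ERealSubdiff hw hbot htop hz
  have hs : 0 < r / 2 := half_pos hr
  have hs' : |r / 2| < r := by rw [abs_of_pos hs]; linarith
  refine ⟨fun i => max (c i (r / 2)) (c i (-(r / 2))) / (r / 2), fun w hw i => abs_le'.2 ⟨?_, ?_⟩⟩
  · rw [le_div_iff₀ hs]
    linarith [hc w hw i _ hs', le_max_left (c i (r / 2)) (c i (-(r / 2)))]
  · rw [le_div_iff₀ hs]
    linarith [hc w hw i _ (by rwa [abs_neg]), le_max_right (c i (r / 2)) (c i (-(r / 2)))]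

lemma bddAbove_norm_image_ERealSubdiff (hbot : g zbar ≠ ⊥)
    (hdom : zbar ∈ interior {z | g z < ⊤}) :
    BddAbove ((‖·‖) '' ERealSubdiff g zbar) := by
  obtain ⟨C, hC⟩ := exists_abs_apply_le_of_mem_ERealSubdiff hbot hdom
  refine ⟨√(∑ i, C i ^ 2), ?_⟩
  rintro _ ⟨w, hw, rfl⟩
  show ‖w‖ ≤ _
  rw [EuclideanSpace.norm_eq]
  gcongr with i
  exact hC w hw i

end Subdifferential

lemma norm_sum_smul_le_of_norm_le {ι E : Type*} [Fintype ι] [SeminormedAddCommGroup E]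
    [NormedSpace ℝ E] (w : EuclideanSpace ℝ ι) {v : ι → E} {ε : ℝ} (hε : 0 ≤ ε)
    (hv : ∀ i, ‖v i‖ ≤ ε) :
    ‖∑ i, w i • v i‖ ≤ ‖w‖ * √(Fintype.card ι) * ε := by
  have hv2 : ∑ i, ‖v i‖ ^ 2 ≤ ∑ _i : ι, ε ^ 2 :=
    Finset.sum_le_sum fun i _ => pow_le_pow_left₀ (norm_nonneg _) (hv i) 2
  calc ‖∑ i, w i • v i‖ ≤ ∑ i, ‖w i • v i‖ := norm_sum_le _ _
    _ = ∑ i, ‖w i‖ * ‖v i‖ := by simp only [norm_smul]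
    _ ≤ √(∑ i, ‖w i‖ ^ 2) * √(∑ i, ‖v i‖ ^ 2) := Real.sum_mul_le_sqrt_mul_sqrt _ _ _
    _ ≤ ‖w‖ * √(∑ _i : ι, ε ^ 2) := by rw [EuclideanSpace.norm_eq]; gcongr
    _ = ‖w‖ * √(Fintype.card ι) * ε := by
        rw [Finset.sum_const, Finset.card_univ, nsmul_eq_mul,
          Real.sqrt_mul (Nat.cast_nonneg _), Real.sqrt_sq hε, mul_assoc]

theorem subdifferential_approximation_bwd_general {n m : ℕ}
    (g : EuclideanSpace ℝ (Fin m) → EReal)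
    (hgbot : ∀ z, g z ≠ ⊥)
    (F : Fin m → EuclideanSpace ℝ (Fin n) → ℝ)
    (xbar : EuclideanSpace ℝ (Fin n))
    (hdom : (WithLp.toLp 2 (fun i => F i xbar) : EuclideanSpace ℝ (Fin m)) ∈ interior {z | g z < ⊤})
    (Δbar κF κG : ℝ) (hκG : 0 < κG)
    (Ft : ℝ → Fin m → EuclideanSpace ℝ (Fin n) → ℝ)
    (hfl : ∀ Δ ∈ Ioo (0:ℝ) Δbar, ∀ i, ∀ y ∈ ball xbar Δ,
      |F i y - Ft Δ i y| ≤ κF * Δ ^ 2 ∧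
      ‖gradient (F i) y - gradient (Ft Δ i) y‖ ≤ κG * Δ)
    (M : ℝ)
    (hM : M = sSup ((fun w => ‖w‖) ''
      ERealSubdiff g (WithLp.toLp 2 (fun i => F i xbar) : EuclideanSpace ℝ (Fin m)))) :
    ∀ Δ ∈ Ioo (0:ℝ) Δbar,
      ∀ vt ∈ (fun w : EuclideanSpace ℝ (Fin m) => ∑ i, w i • gradient (Ft Δ i) xbar) ''
        ERealSubdiff g (WithLp.toLp 2 (fun i => F i xbar) : EuclideanSpace ℝ (Fin m)),
      ∃ v ∈ (fun w : EuclideanSpace ℝ (Fin m) => ∑ i, w i • gradient (F i) xbar) ''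
        ERealSubdiff g (WithLp.toLp 2 (fun i => F i xbar) : EuclideanSpace ℝ (Fin m)),
      ‖v - vt‖ ≤ M * Real.sqrt m * κG * Δ := by
  rintro Δ hΔ _ ⟨w, hw, rfl⟩
  refine ⟨_, ⟨w, hw, rfl⟩, ?_⟩
  have hwM : ‖w‖ ≤ M :=
    hM ▸ le_csSup (bddAbove_norm_image_ERealSubdiff (hgbot _) hdom) ⟨w, hw, rfl⟩
  have hgrad (i : Fin m) : ‖gradient (F i) xbar - gradient (Ft Δ i) xbar‖ ≤ κG * Δ :=
    (hfl Δ hΔ i xbar (mem_ball_self hΔ.1)).2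
  have hκGΔ : 0 ≤ κG * Δ := mul_nonneg hκG.le hΔ.1.le
  calc ‖∑ i, w i • gradient (F i) xbar - ∑ i, w i • gradient (Ft Δ i) xbar‖
      = ‖∑ i, w i • (gradient (F i) xbar - gradient (Ft Δ i) xbar)‖ := by
        simp only [smul_sub, Finset.sum_sub_distrib]
    _ ≤ ‖w‖ * √(Fintype.card (Fin m)) * (κG * Δ) := norm_sum_smul_le_of_norm_le w hκGΔ hgrad
    _ ≤ M * √m * (κG * Δ) := by rw [Fintype.card_fin]; gcongr
    _ = M * √m * κG * Δ := by ring

/-- **Subdifferential approximations** (Theorem 4.1, part 2). Under the assumptions that `g` is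
convex lsc, `F(x̄) ∈ int(dom g)`, `F̃_Δ` are fully linear models of `F` at `x̄` with constants
`κF, κG`, and `F̃_Δ(x̄) = F(x̄)`, with `M = sup{‖w‖ : w ∈ ∂g(F(x̄))}`: for every `Δ ∈ (0, Δ̄)`
and every `ṽ ∈ ∇F̃_Δ(x̄)ᵀ ∂g(F(x̄))` there exists `v ∈ ∇F(x̄)ᵀ ∂g(F(x̄))` with
`‖v − ṽ‖ ≤ M √m κG Δ`. -/
theorem subdifferential_approximation_bwd {n m : ℕ}
    (g : EuclideanSpace ℝ (Fin m) → EReal)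
    (hgbot : ∀ z, g z ≠ ⊥)
    (hconv : Convex ℝ {p : EuclideanSpace ℝ (Fin m) × ℝ | g p.1 ≤ (p.2 : EReal)})
    (hlsc : IsClosed {p : EuclideanSpace ℝ (Fin m) × ℝ | g p.1 ≤ (p.2 : EReal)})
    (F : Fin m → EuclideanSpace ℝ (Fin n) → ℝ)
    (hF : ∀ i, ContDiff ℝ 1 (F i))
    (xbar : EuclideanSpace ℝ (Fin n))
    (hdom : (WithLp.toLp 2 (fun i => F i xbar) : EuclideanSpace ℝ (Fin m)) ∈ interior {z | g z < ⊤})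
    (Δbar κF κG : ℝ) (hΔbar : 0 < Δbar) (hκF : 0 < κF) (hκG : 0 < κG)
    (Ft : ℝ → Fin m → EuclideanSpace ℝ (Fin n) → ℝ)
    (hFtC1 : ∀ Δ ∈ Ioo (0:ℝ) Δbar, ∀ i, ContDiff ℝ 1 (Ft Δ i))
    (hfl : ∀ Δ ∈ Ioo (0:ℝ) Δbar, ∀ i, ∀ y ∈ ball xbar Δ,
      |F i y - Ft Δ i y| ≤ κF * Δ ^ 2 ∧
      ‖gradient (F i) y - gradient (Ft Δ i) y‖ ≤ κG * Δ)
    (hcenter : ∀ Δ ∈ Ioo (0:ℝ) Δbar, ∀ i, Ft Δ i xbar = F i xbar)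
    (M : ℝ)
    (hM : M = sSup ((fun w => ‖w‖) ''
      ERealSubdiff g (WithLp.toLp 2 (fun i => F i xbar) : EuclideanSpace ℝ (Fin m)))) :
    ∀ Δ ∈ Ioo (0:ℝ) Δbar,
      ∀ vt ∈ (fun w : EuclideanSpace ℝ (Fin m) => ∑ i, w i • gradient (Ft Δ i) xbar) ''
        ERealSubdiff g (WithLp.toLp 2 (fun i => F i xbar) : EuclideanSpace ℝ (Fin m)),
      ∃ v ∈ (fun w : EuclideanSpace ℝ (Fin m) => ∑ i, w i • gradient (F i) xbar) ''
        ERealSubdiff g (WithLp.toLp 2 (fun i => F i xbar) : EuclideanSpace ℝ (Fin m)),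
      ‖v - vt‖ ≤ M * Real.sqrt m * κG * Δ :=
  subdifferential_approximation_bwd_general g hgbot F xbar hdom Δbar κF κG hκG Ft hfl M hM
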